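/- arXiv:1504.08196 — 2 statements merged into one kernel-verified Lean document; each statement's English description precedes it below -/
import Mathlib

section
/- For 0 < β < 1, the determinant of the n×n first-order stable spline kernel K_β with (K_β)_{ij} = β^{max(i,j)} equals (1-β)^{n-1} · β^{n(n+1)/2}. -/
/-!
`K_β` is the matrix `(a (max i j))` with `a k = β ^ (k + 1)`. For any such "max matrix",
subtracting the second row from the first kills the first row except for the corner entry
`a 0 - a 1`, and the complementary minor is the max matrix of the shifted sequence. Hence
`det = a (n - 1) * ∏_{k < n - 1} (a k - a (k + 1))`, and for `a k = β ^ (k + 1)` each factor is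
`(1 - β) β ^ (k + 1)`.
-/

open Matrix

/-- First-order stable spline (TC) kernel, `(K_β)_{ij} = β^{max(i,j)}` with 1-based indexing. -/
noncomputable def ssKernel (n : ℕ) (β : ℝ) : Matrix (Fin n) (Fin n) ℝ :=
  fun i j => β ^ (max i.val j.val + 1)

open Finset

section MaxMatrix

variable {R : Type*} [CommRing R]

def maxMatrix (a : ℕ → R) (n : ℕ) : Matrix (Fin n) (Fin n) R :=
  fun i j => a (max i.val j.val)

theorem det_maxMatrix_succ_succ (a : ℕ → R) (n : ℕ) :
    (maxMatrix a (n + 2)).det =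
      (a 0 - a 1) * (maxMatrix (fun k => a (k + 1)) (n + 1)).det := by
  set M := maxMatrix a (n + 2)
  set A := M.updateRow 0 (M 0 - M 1)
  have hA : M.det = A.det := by
    simpa [A, sub_eq_add_neg] using
      (det_updateRow_add_smul_self M (by simp : (0 : Fin (n + 2)) ≠ 1) (-1 : R)).symm
  have hrow : ∀ j : Fin (n + 2), j ≠ 0 → A 0 j = 0 := by
    intro j hj
    have : 1 ≤ j.val := Nat.one_le_iff_ne_zero.mpr (Fin.val_ne_zero_iff.mpr hj)
    simp [A, M, maxMatrix, max_eq_right this]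
  have hminor : A.submatrix Fin.succ Fin.succ = maxMatrix (fun k => a (k + 1)) (n + 1) := by
    ext i j
    simp [A, M, maxMatrix, Fin.succ_ne_zero, Nat.succ_max_succ]
  rw [hA, det_succ_row_zero, Fintype.sum_eq_single 0 fun j hj => by simp [hrow j hj]]
  simp [hminor, A, M, maxMatrix]

theorem det_maxMatrix_succ (a : ℕ → R) (n : ℕ) :
    (maxMatrix a (n + 1)).det = a n * ∏ k ∈ range n, (a k - a (k + 1)) := by
  induction n generalizing a with
  | zero => simp [maxMatrix]
  | succ n ih =>
    rw [det_maxMatrix_succ_succ, ih, prod_range_succ']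
    ring

theorem prod_range_pow_succ (β : R) (n : ℕ) :
    ∏ k ∈ range n, β ^ (k + 1) = β ^ (n * (n + 1) / 2) := by
  have hsum : ∑ k ∈ range n, (k + 1) = ∑ k ∈ range (n + 1), k := by simp [sum_range_succ']
  rw [prod_pow_eq_pow_sum, hsum, sum_range_id, Nat.add_sub_cancel, mul_comm]

end MaxMatrix

theorem ssKernel_eq_maxMatrix (n : ℕ) (β : ℝ) :
    ssKernel n β = maxMatrix (fun k => β ^ (k + 1)) n :=
  rfl

theorem stable_spline_det_general (n : ℕ) (β : ℝ) :
    (ssKernel n β).det = (1 - β) ^ (n - 1) * β ^ (n * (n + 1) / 2) := by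
  cases n with
  | zero => simp
  | succ n =>
    have hfactor : ∀ k, β ^ (k + 1) - β ^ (k + 1 + 1) = (1 - β) * β ^ (k + 1) :=
      fun k => by ring
    rw [ssKernel_eq_maxMatrix, det_maxMatrix_succ, ← prod_range_pow_succ, prod_range_succ]
    simp only [hfactor, prod_mul_distrib, prod_const, card_range, Nat.add_sub_cancel]
    ring

theorem stable_spline_det (n : ℕ) (β : ℝ) (hβ : 0 < β) (hβ1 : β < 1) :
    (ssKernel n β).det = (1 - β) ^ (n - 1) * β ^ (n * (n + 1) / 2) :=
  stable_spline_det_general n β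
end

section
/- For 0 < β < 1, the first-order stable spline kernel matrix K_β with (K_β)_{ij} = β^{max(i,j)} is positive definite. -/
open Matrix

/-!
Writing `g k = β ^ (k + 1)`, the entry `g (max i j)` telescopes to
`g n + ∑_{max i j ≤ k < n} (g k - g (k + 1))`. Hence `K = Lᵀ D L + g n • 𝟙𝟙ᵀ`, where `L` is the
lower-triangular all-ones matrix (determinant `1`) and `D` is diagonal with the positive
increments `g k - g (k + 1)`; so `K` is a congruence of a positive definite matrix plus a
positive semidefinite one.
-/

namespace Matrix

def lowerOnes (ι R : Type*) [LinearOrder ι] [Zero R] [One R] : Matrix ι ι R :=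
  of fun k i => if i ≤ k then 1 else 0

theorem isLowerTriangular_lowerOnes (ι R : Type*) [LinearOrder ι] [Zero R] [One R] :
    (lowerOnes ι R).IsLowerTriangular :=
  fun _ _ h => if_neg (not_le.2 (OrderDual.toDual_lt_toDual.1 h))

section lowerOnes

variable {ι : Type*} [Fintype ι] [LinearOrder ι]

theorem det_lowerOnes (R : Type*) [CommRing R] : (lowerOnes ι R).det = 1 := by
  rw [det_of_isLowerTriangular _ (isLowerTriangular_lowerOnes ι R)]
  simp [lowerOnes]

theorem mulVec_injective_lowerOnes {K : Type*} [Field K] :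
    Function.Injective (lowerOnes ι K).mulVec :=
  mulVec_injective_iff_isUnit.2 <| (isUnit_iff_isUnit_det _).2 <| by simp [det_lowerOnes K]

end lowerOnes

def maxKernel (g : ℕ → ℝ) (n : ℕ) : Matrix (Fin n) (Fin n) ℝ :=
  of fun i j => g (max i.val j.val)

theorem maxKernel_eq (g : ℕ → ℝ) (n : ℕ) :
    maxKernel g n = (lowerOnes (Fin n) ℝ)ᵀ * diagonal (fun k : Fin n => g k.val - g (k.val + 1))
      * lowerOnes (Fin n) ℝ + g n • vecMulVec 1 1 := by
  ext i j
  set m := max i.val j.val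
  have hm : m ≤ n := (max_lt i.isLt j.isLt).le
  have entry : ((lowerOnes (Fin n) ℝ)ᵀ * diagonal (fun k : Fin n => g k.val - g (k.val + 1))
      * lowerOnes (Fin n) ℝ) i j = ∑ k ∈ Finset.Ico m n, (g k - g (k + 1)) := by
    have := Fin.sum_univ_eq_sum_range (fun k => if m ≤ k then g k - g (k + 1) else 0) n
    simp only [← Finset.sum_filter, Finset.range_eq_Ico, Finset.Ico_filter_le, Nat.zero_max] at this
    rw [← this, Finset.sum_filter]
    simp only [mul_apply (M := _ * _), mul_diagonal, transpose_apply, lowerOnes, of_apply]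
    refine Finset.sum_congr rfl fun k _ => ?_
    simp only [m, max_le_iff, ← Fin.le_def]
    split_ifs <;> simp_all
  have telescope := Finset.sum_Ico_sub g hm
  rw [add_apply, entry, smul_apply, vecMulVec_apply]
  simp only [maxKernel, of_apply, Pi.one_apply, mul_one, smul_eq_mul]
  rw [Finset.sum_sub_distrib] at telescope ⊢
  linarith

theorem posDef_maxKernel {g : ℕ → ℝ} {n : ℕ} (hg : ∀ k < n, g (k + 1) < g k) (hgn : 0 ≤ g n) :
    (maxKernel g n).PosDef := by
  rw [maxKernel_eq]
  have ones : (vecMulVec 1 1 : Matrix (Fin n) (Fin n) ℝ).PosSemidef := by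
    simpa using posSemidef_vecMulVec_self_star (1 : Fin n → ℝ)
  refine PosDef.add_posSemidef ?_ (ones.smul hgn)
  exact PosDef.conjTranspose_mul_mul_same (posDef_diagonal_iff.2 fun k => sub_pos.2 (hg k k.isLt))
    mulVec_injective_lowerOnes

end Matrix

theorem stable_spline_posDef_general (n : ℕ) (β : ℝ) (hβ : 0 < β) (hβ1 : β < 1) :
    (ssKernel n β).PosDef :=
  posDef_maxKernel (g := fun k => β ^ (k + 1))
    (fun k _ => pow_lt_pow_right_of_lt_one₀ hβ hβ1 (Nat.lt_succ_self _)) (by positivity)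

theorem stable_spline_posDef (n : ℕ) (hn : 1 ≤ n) (β : ℝ) (hβ : 0 < β) (hβ1 : β < 1) :
    (ssKernel n β).PosDef :=
  stable_spline_posDef_general n β hβ hβ1
end
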